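/- Assume that for every i ∈ 𝐈, h_i(x) = ρ^i · (x − x*_i)⁺ for all x ∈ ℝ, where ρ^i > 0 and x*_i ≤ 0 are constants. Then there exists T > 0 such that the mapping F is nondecreasing on [0,T): for all 0 ≤ t ≤ t̃ < T and all i ∈ 𝐈, F_i(t) ≤ F_i(t̃). -/

import Mathlib

/-- The set of indices at which `a` attains its minimum. -/
noncomputable def argminSet {n : ℕ} (a : Fin n → ℝ) : Finset (Fin n) :=
  Finset.univ.filter (fun i => ∀ j, a i ≤ a j)

/-- The minimum entry of `a`. -/
noncomputable def minval {n : ℕ} (a : Fin n → ℝ) : ℝ := ⨅ i, a i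

/-- The restriction of `a` to the indices in `S`, reindexed by `Fin S.card`
in increasing order. -/
noncomputable def restrictVec {n : ℕ} (S : Finset (Fin n)) (a : Fin n → ℝ) :
    Fin S.card → ℝ :=
  fun i => a (S.orderIsoOfFin rfl i).1

/-- The "min-sensitive" partial order `⪕` on `ℝⁿ` (Definition 1 of the paper):
for `n = 1` it is the usual order; for `n ≥ 2`, `a ⪕ b` iff (i) `a = b`, or
(ii) `min a < min b`, or (iii) `min a = min b` and `Argmin b ⊊ Argmin a`, or
(iv) `min a = min b`, `Argmin a = Argmin b ⊊ {1,...,n}` and the restrictions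
of `a` and `b` to the complement of the common argmin set are related. -/
noncomputable def msLE : (n : ℕ) → (Fin n → ℝ) → (Fin n → ℝ) → Prop
  | 0, _, _ => True
  | 1, a, b => a 0 ≤ b 0
  | n + 2, a, b =>
    a = b ∨
    minval a < minval b ∨
    (minval a = minval b ∧ argminSet b ⊂ argminSet a) ∨
    (minval a = minval b ∧ argminSet a = argminSet b ∧ argminSet a ⊂ Finset.univ ∧
      msLE ((argminSet a)ᶜ).card (restrictVec (argminSet a)ᶜ a) (restrictVec (argminSet a)ᶜ b))
termination_by n => n
decreasing_by
  have hne : (argminSet a).Nonempty := by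
    obtain ⟨i, -, hi⟩ := Finset.exists_min_image Finset.univ a ⟨0, Finset.mem_univ 0⟩
    refine ⟨i, ?_⟩
    unfold argminSet
    exact Finset.mem_filter.mpr ⟨Finset.mem_univ i, fun j => hi j (Finset.mem_univ j)⟩
  have h1 : 0 < (argminSet a).card := Finset.card_pos.mpr hne
  have h2 : ((argminSet a)ᶜ).card = Fintype.card (Fin (n + 2)) - (argminSet a).card :=
    Finset.card_compl _
  simp only [Fintype.card_fin] at h2
  omega

/-- `x*_i`: the supremum of the zero set of a function. -/
noncomputable def xstar (f : ℝ → ℝ) : ℝ := sSup {x | f x = 0}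

/-- The admissible set `A_t`. -/
def admissible (I J : ℕ) (h : Fin I → ℝ → ℝ) (G : Fin J → Finset (Fin I)) (t : ℝ) :
    Set (Fin I → ℝ) :=
  {a | (∀ i, a i ≤ t) ∧ ∀ j, (∑ i ∈ G j, h i (a i)) ≤ t}

/-- `F` is the `⪕`-greatest element of `A_t`. -/
def IsGreatestMS (I J : ℕ) (h : Fin I → ℝ → ℝ) (G : Fin J → Finset (Fin I)) (t : ℝ)
    (F : Fin I → ℝ) : Prop :=
  F ∈ admissible I J h G t ∧ ∀ a ∈ admissible I J h G t, msLE I a F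

/-!
Generalize to constraints `∑ i, w k i * (a i - x k i)⁺ ≤ c k * t` with `w, c ≥ 0` (the caps
`a i ≤ t` are constraints of this form) and induct on the dimension. Let `μ` be the lowest
threshold carrying weight. For small `t` only the thresholds equal to `μ` are active near level
`μ`, so the constant vector `μ + ε t` is admissible for the largest rate `ε` allowed by the bottom
weights, and a constraint attaining `ε` forces `min F(t) = μ + ε t`. A competitor rising at a
slightly larger rate off the bottom coordinates `S` of the tight constraints shows that the
minimum is attained exactly on `S`. Freezing `S` at `μ + ε t` leaves a problem of the same form,
with capacities reduced by `ε` times the bottom weight on `S`, and the restriction of `F(t)` is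
its greatest element; induction gives monotonicity off `S`.

At `t = 0` every `h i (F 0 i)` vanishes, so `max (F 0) (F t)` is admissible at time `t` and
maximality of `F t` gives `F 0 ≤ F t`.
-/

open Finset Filter Topology

section MinSensitiveOrder

variable {n : ℕ}

lemma mem_argminSet_iff {a : Fin n → ℝ} {i : Fin n} : i ∈ argminSet a ↔ ∀ j, a i ≤ a j := by
  simp [argminSet]

lemma argminSet_nonempty (hn : 0 < n) (a : Fin n → ℝ) : (argminSet a).Nonempty := by
  obtain ⟨i, -, hi⟩ := exists_min_image univ a ⟨⟨0, hn⟩, mem_univ _⟩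
  exact ⟨i, mem_argminSet_iff.2 fun j => hi j (mem_univ j)⟩

lemma minval_eq_of_mem_argminSet {a : Fin n → ℝ} {i : Fin n} (hi : i ∈ argminSet a) :
    minval a = a i :=
  have : Nonempty (Fin n) := ⟨i⟩
  le_antisymm (ciInf_le (Set.finite_range a).bddBelow i) (le_ciInf (mem_argminSet_iff.1 hi))

lemma minval_le (a : Fin n → ℝ) (i : Fin n) : minval a ≤ a i := by
  obtain ⟨i₀, hi₀⟩ := argminSet_nonempty i.pos a
  exact (minval_eq_of_mem_argminSet hi₀).trans_le (mem_argminSet_iff.1 hi₀ i)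

lemma mem_argminSet_iff_eq {a : Fin n → ℝ} {i : Fin n} : i ∈ argminSet a ↔ a i = minval a :=
  ⟨fun h => (minval_eq_of_mem_argminSet h).symm,
    fun h => mem_argminSet_iff.2 fun j => h ▸ minval_le a j⟩

lemma minval_lt_of_notMem_argminSet {a : Fin n → ℝ} {i : Fin n} (hi : i ∉ argminSet a) :
    minval a < a i :=
  (minval_le a i).lt_of_ne fun h => hi (mem_argminSet_iff_eq.2 h.symm)

lemma minval_const (hn : 0 < n) (v : ℝ) : minval (fun _ : Fin n => v) = v :=
  minval_eq_of_mem_argminSet (i := ⟨0, hn⟩) (mem_argminSet_iff.2 fun _ => le_rfl)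

lemma minval_eq_and_argminSet_eq {a : Fin n → ℝ} {S : Finset (Fin n)} {v : ℝ} (hS : S.Nonempty)
    (haS : ∀ i ∈ S, a i = v) (haSc : ∀ i ∉ S, v < a i) : minval a = v ∧ argminSet a = S := by
  obtain ⟨i₀, hi₀⟩ := hS
  have hle : ∀ j, v ≤ a j := fun j => by
    by_cases hj : j ∈ S
    · exact (haS j hj).ge
    · exact (haSc j hj).le
  have hmin : minval a = v :=
    (minval_eq_of_mem_argminSet (mem_argminSet_iff.2 fun j => (haS i₀ hi₀).trans_le (hle j))).trans
      (haS i₀ hi₀)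
  refine ⟨hmin, Finset.ext fun i => ?_⟩
  rw [mem_argminSet_iff_eq, hmin]
  exact ⟨fun h => by_contra fun hi => (haSc i hi).ne' h, haS i⟩

lemma msLE_of_card_eq_zero {m : ℕ} (hm : m = 0) (a b : Fin m → ℝ) : msLE m a b := by
  subst hm
  rw [msLE]
  trivial

lemma msLE_refl : ∀ (n : ℕ) (a : Fin n → ℝ), msLE n a a
  | 0, a => msLE_of_card_eq_zero rfl a a
  | 1, a => by rw [msLE]
  | _ + 2, a => by rw [msLE]; exact Or.inl rfl

lemma minval_fin_one (a : Fin 1 → ℝ) : minval a = a 0 :=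
  minval_eq_of_mem_argminSet (mem_argminSet_iff.2 fun j => Subsingleton.elim j 0 ▸ le_rfl)

lemma msLE_of_minval_lt : ∀ {n : ℕ} {a b : Fin n → ℝ}, minval a < minval b → msLE n a b
  | 0, a, b, _ => msLE_of_card_eq_zero rfl a b
  | 1, a, b, h => by rw [msLE]; rw [minval_fin_one, minval_fin_one] at h; exact h.le
  | _ + 2, _, _, h => by rw [msLE]; exact Or.inr (Or.inl h)

lemma minval_le_of_msLE : ∀ {n : ℕ} {a b : Fin n → ℝ}, msLE n a b → minval a ≤ minval b
  | 0, _, _, _ => by simp [minval]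
  | 1, a, b, h => by rw [msLE] at h; rwa [minval_fin_one, minval_fin_one]
  | _ + 2, _, _, h => by
    rw [msLE] at h
    rcases h with rfl | h | ⟨h, -⟩ | ⟨h, -⟩
    exacts [le_rfl, h.le, h.le, h.le]

lemma argminSet_subset_of_msLE : ∀ {n : ℕ} {a b : Fin n → ℝ}, msLE n a b →
    minval a = minval b → argminSet b ⊆ argminSet a
  | 0, _, _, _, _ => fun i => i.elim0
  | 1, _, _, _, _ => fun i _ => mem_argminSet_iff.2 fun j => Subsingleton.elim j i ▸ le_rfl
  | _ + 2, _, _, h, hmin => by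
    rw [msLE] at h
    rcases h with rfl | h | ⟨-, h⟩ | ⟨-, h, -⟩
    exacts [subset_rfl, absurd hmin h.ne, h.subset, h.ge]

end MinSensitiveOrder

section Restriction

variable {n : ℕ}

@[simp]
lemma restrictVec_orderIsoOfFin_symm (T : Finset (Fin n)) (a : Fin n → ℝ) {i : Fin n}
    (hi : i ∈ T) : restrictVec T a ((T.orderIsoOfFin rfl).symm ⟨i, hi⟩) = a i := by
  simp [restrictVec]

lemma restrictVec_eq_restrictVec_iff {T : Finset (Fin n)} {a b : Fin n → ℝ} :
    restrictVec T a = restrictVec T b ↔ ∀ i ∈ T, a i = b i :=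
  ⟨fun h i hi => by simpa using congrFun h ((T.orderIsoOfFin rfl).symm ⟨i, hi⟩),
    fun h => funext fun j => h _ (T.orderIsoOfFin rfl j).2⟩

lemma exists_restrictVec_eq (T : Finset (Fin n)) (v : ℝ) (b : Fin T.card → ℝ) :
    ∃ a : Fin n → ℝ, restrictVec T a = b ∧ ∀ i ∉ T, a i = v := by
  refine ⟨fun i => if h : i ∈ T then b ((T.orderIsoOfFin rfl).symm ⟨i, h⟩) else v,
    funext fun j => ?_, fun i hi => dif_neg hi⟩
  simp only [restrictVec, dif_pos (T.orderIsoOfFin rfl j).2]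
  exact congrArg b ((T.orderIsoOfFin rfl).symm_apply_apply j)

lemma sum_restrictVec (T : Finset (Fin n)) (f : Fin n → ℝ) :
    ∑ j, restrictVec T f j = ∑ i ∈ T, f i :=
  ((T.orderIsoOfFin rfl).toEquiv.sum_comp (fun i : T => f i)).trans (sum_coe_sort T f)

end Restriction

section Peeling

variable {n : ℕ}

lemma card_compl_argminSet_lt (hn : 0 < n) (a : Fin n → ℝ) : (argminSet a)ᶜ.card < n := by
  simpa using (card_compl_lt_iff_nonempty _).2 (argminSet_nonempty hn a)

lemma eq_of_msLE_of_le : ∀ {n : ℕ} {a b : Fin n → ℝ}, (∀ i, b i ≤ a i) → msLE n a b → a = b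
  | 0, _, _, _, _ => funext fun i => i.elim0
  | 1, a, b, hle, h => by
    rw [msLE] at h
    exact funext fun i => Subsingleton.elim i 0 ▸ le_antisymm h (hle 0)
  | m + 2, a, b, hle, h => by
    obtain ⟨i₀, hi₀⟩ := argminSet_nonempty (by omega) a
    have hmin : minval b ≤ minval a :=
      (minval_le b i₀).trans ((hle i₀).trans (minval_eq_of_mem_argminSet hi₀).ge)
    rw [msLE] at h
    rcases h with h | h | ⟨hab, hsub⟩ | ⟨hab, hargmin, -, hrec⟩
    · exact h
    · exact absurd h hmin.not_gt
    · obtain ⟨i, hia, hib⟩ := Finset.exists_of_ssubset hsub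
      refine absurd (mem_argminSet_iff_eq.2 (le_antisymm ?_ (minval_le b i))) hib
      exact (hle i).trans ((minval_eq_of_mem_argminSet hia).symm.trans hab).le
    · have := card_compl_argminSet_lt (by omega) a
      have hrest := eq_of_msLE_of_le (fun j => hle _) hrec
      funext i
      by_cases hi : i ∈ argminSet a
      · rw [← minval_eq_of_mem_argminSet hi, hab, minval_eq_of_mem_argminSet (hargmin ▸ hi)]
      · exact restrictVec_eq_restrictVec_iff.1 hrest i (Finset.mem_compl.2 hi)
termination_by n => n

/-- Only clause (iv) of the order can relate two such vectors. -/
lemma msLE_restrictVec_compl {a b : Fin n → ℝ} {S : Finset (Fin n)} {v : ℝ} (hS : S.Nonempty)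
    (haS : ∀ i ∈ S, a i = v) (haSc : ∀ i ∉ S, v < a i)
    (hbS : ∀ i ∈ S, b i = v) (hbSc : ∀ i ∉ S, v < b i) (h : msLE n a b) :
    msLE Sᶜ.card (restrictVec Sᶜ a) (restrictVec Sᶜ b) := by
  obtain ⟨hma, haa⟩ := minval_eq_and_argminSet_eq hS haS haSc
  obtain ⟨hmb, hab⟩ := minval_eq_and_argminSet_eq hS hbS hbSc
  rcases Sᶜ.eq_empty_or_nonempty with hSc | hSc
  · exact msLE_of_card_eq_zero (by rw [hSc, Finset.card_empty]) _ _
  obtain ⟨m, rfl⟩ : ∃ m, n = m + 2 := by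
    have hcard := card_add_card_compl S
    rw [Fintype.card_fin] at hcard
    have := hS.card_pos
    have := hSc.card_pos
    exact ⟨n - 2, by omega⟩
  rw [msLE] at h
  rcases h with rfl | h | ⟨-, h⟩ | ⟨-, -, -, h⟩
  · exact msLE_refl _ _
  · rw [hma, hmb] at h
    exact absurd h (lt_irrefl v)
  · rw [haa, hab] at h
    exact absurd h (ssubset_irrefl S)
  · rwa [haa] at h

def IsMSGreatest (A : Set (Fin n → ℝ)) (a : Fin n → ℝ) : Prop :=
  a ∈ A ∧ ∀ b ∈ A, msLE n b a

lemma IsMSGreatest.restrictVec_compl {S : Finset (Fin n)} {A : Set (Fin n → ℝ)}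
    {B : Set (Fin Sᶜ.card → ℝ)} {F : Fin n → ℝ} {v : ℝ} (hF : IsMSGreatest A F) (hS : S.Nonempty)
    (hFS : ∀ i ∈ S, F i = v) (hFSc : ∀ i ∉ S, v < F i)
    (hAB : ∀ a : Fin n → ℝ, (∀ i ∈ S, a i = v) → (a ∈ A ↔ restrictVec Sᶜ a ∈ B)) :
    IsMSGreatest B (restrictVec Sᶜ F) := by
  refine ⟨(hAB F hFS).1 hF.1, fun b hb => ?_⟩
  rcases lt_or_ge (minval b) (minval (restrictVec Sᶜ F)) with hlt | hge
  · exact msLE_of_minval_lt hlt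
  obtain ⟨a, rfl, haS⟩ := exists_restrictVec_eq Sᶜ v b
  have haS : ∀ i ∈ S, a i = v := fun i hi => haS i (notMem_compl.2 hi)
  have haSc : ∀ i ∉ S, v < a i := fun i hi => by
    obtain ⟨j₀, hj₀⟩ := argminSet_nonempty (card_pos.2 ⟨i, mem_compl.2 hi⟩) (restrictVec Sᶜ F)
    calc v < F (Sᶜ.orderIsoOfFin rfl j₀) := hFSc _ (mem_compl.1 (Sᶜ.orderIsoOfFin rfl j₀).2)
      _ = minval (restrictVec Sᶜ F) := (minval_eq_of_mem_argminSet hj₀).symm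
      _ ≤ minval (restrictVec Sᶜ a) := hge
      _ ≤ restrictVec Sᶜ a ((Sᶜ.orderIsoOfFin rfl).symm ⟨i, mem_compl.2 hi⟩) := minval_le _ _
      _ = a i := restrictVec_orderIsoOfFin_symm _ _ _
  exact msLE_restrictVec_compl hS haS haSc hFS hFSc (hF.2 a ((hAB a haS).2 hb))

end Peeling

lemma exists_pos_forall_le_of_pos {ι : Type*} [Finite ι] (f : ι → ℝ) :
    ∃ g > 0, ∀ i, 0 < f i → g ≤ f i := by
  classical
  cases nonempty_fintype ι
  by_cases hpos : (univ.filter fun i => 0 < f i).Nonempty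
  · obtain ⟨i₀, hi₀, hmin⟩ := exists_min_image _ f hpos
    exact ⟨f i₀, (mem_filter.1 hi₀).2, fun i hi => hmin i (mem_filter.2 ⟨mem_univ i, hi⟩)⟩
  · exact ⟨1, one_pos, fun i hi => absurd ⟨i, mem_filter.2 ⟨mem_univ i, hi⟩⟩ hpos⟩

section Rates

variable {κ : Type*} [Fintype κ] (W c : κ → ℝ)

lemma exists_fillRate (hc : ∀ k, 0 ≤ c k) (hW : ∃ k, 0 < W k) :
    ∃ ε, 0 ≤ ε ∧ (∀ k, ε * W k ≤ c k) ∧ ∃ k, 0 < W k ∧ ε * W k = c k := by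
  classical
  obtain ⟨k₀, hk₀, hmin⟩ :=
    exists_min_image (univ.filter fun k => 0 < W k) (fun k => c k / W k)
      (by simpa [filter_nonempty_iff] using hW)
  have hk₀ : 0 < W k₀ := (mem_filter.1 hk₀).2
  refine ⟨c k₀ / W k₀, div_nonneg (hc k₀) hk₀.le, fun k => ?_, k₀, hk₀, div_mul_cancel₀ _ hk₀.ne'⟩
  rcases lt_or_ge 0 (W k) with hk | hk
  · exact (le_div_iff₀ hk).1 (hmin k (mem_filter.2 ⟨mem_univ k, hk⟩))
  · exact (mul_nonpos_of_nonneg_of_nonpos (div_nonneg (hc k₀) hk₀.le) hk).trans (hc k)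

lemma exists_nextRate {ε : ℝ} (hc : ∀ k, 0 ≤ c k) (hε : 0 ≤ ε) (hεW : ∀ k, ε * W k ≤ c k) :
    ∃ δ > 0, ∀ k, ε * W k ≠ c k → (ε + δ) * W k ≤ c k := by
  obtain ⟨δ, hδ, hle⟩ := exists_pos_forall_le_of_pos fun k => (c k - ε * W k) / W k
  refine ⟨δ, hδ, fun k hk => ?_⟩
  rcases lt_or_ge 0 (W k) with hWk | hWk
  · have := hle k (div_pos (sub_pos.2 ((hεW k).lt_of_ne hk)) hWk)
    rw [le_div_iff₀ hWk] at this
    linarith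
  · exact (mul_nonpos_of_nonneg_of_nonpos (by linarith) hWk).trans (hc k)

end Rates

section LinearConstraints

variable {n : ℕ} {κ : Type*}

def linearAdmissible (w x : κ → Fin n → ℝ) (c : κ → ℝ) (t : ℝ) : Set (Fin n → ℝ) :=
  {a | ∀ k, ∑ i, w k i * max (a i - x k i) 0 ≤ c k * t}

noncomputable def bottomWeight (w x : κ → Fin n → ℝ) (μ : ℝ) (s : Finset (Fin n)) (k : κ) : ℝ :=
  ∑ i ∈ s, if x k i = μ then w k i else 0

variable {w x : κ → Fin n → ℝ} {c : κ → ℝ} {t μ g : ℝ}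

lemma exists_pos_weight [Fintype κ] (hw : ∀ k i, 0 ≤ w k i) (hn : 0 < n) {F : Fin n → ℝ}
    (hF : IsMSGreatest (linearAdmissible w x c t) F) : ∃ k i, 0 < w k i := by
  by_contra! hzero
  have hsum (a : Fin n → ℝ) (k : κ) : ∑ i, w k i * max (a i - x k i) 0 = 0 := by
    simp [fun i => le_antisymm (hzero k i) (hw k i)]
  have hmem : (fun i => F i + 1) ∈ linearAdmissible w x c t := fun k => by
    rw [hsum]
    exact (hsum F k).symm.trans_le (hF.1 k)
  have := congrFun (eq_of_msLE_of_le (fun i => by simp) (hF.2 _ hmem)) ⟨0, hn⟩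
  simp at this

lemma exists_baseLevel [Fintype κ] (hpos : ∃ k i, 0 < w k i) :
    ∃ μ g, 0 < g ∧ (∃ k i, 0 < w k i ∧ x k i = μ) ∧
      ∀ k i, 0 < w k i → x k i = μ ∨ μ + g ≤ x k i := by
  classical
  obtain ⟨p₀, hp₀, hmin⟩ := exists_min_image (univ.filter fun p : κ × Fin n => 0 < w p.1 p.2)
    (fun p => x p.1 p.2) (by simpa [filter_nonempty_iff] using hpos)
  obtain ⟨g, hg, hle⟩ := exists_pos_forall_le_of_pos fun p : κ × Fin n => x p.1 p.2 - x p₀.1 p₀.2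
  refine ⟨x p₀.1 p₀.2, g, hg, ⟨p₀.1, p₀.2, (mem_filter.1 hp₀).2, rfl⟩, fun k i hki => ?_⟩
  rcases (hmin (k, i) (mem_filter.2 ⟨mem_univ _, hki⟩)).eq_or_lt with h | h
  · exact Or.inl h.symm
  · exact Or.inr (by linarith [hle (k, i) (sub_pos.2 h)])

lemma sum_eq_sum_bottom (hw : ∀ k i, 0 ≤ w k i) (hg : 0 < g)
    (hgap : ∀ k i, 0 < w k i → x k i = μ ∨ μ + g ≤ x k i) {s : Finset (Fin n)}
    {a : Fin n → ℝ} (ha : ∀ i ∈ s, a i < μ + g) (k : κ) :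
    ∑ i ∈ s, w k i * max (a i - x k i) 0 =
      ∑ i ∈ s, (if x k i = μ then w k i else 0) * max (a i - μ) 0 := by
  refine sum_congr rfl fun i hi => ?_
  rcases (hw k i).eq_or_lt with hzero | hpos
  · simp [← hzero]
  rcases hgap k i hpos with hxi | hxi
  · simp [hxi]
  · rw [if_neg (by linarith), max_eq_right (by linarith [ha i hi])]
    simp

lemma mem_linearAdmissible_of_le (hw : ∀ k i, 0 ≤ w k i) (hg : 0 < g)
    (hgap : ∀ k i, 0 < w k i → x k i = μ ∨ μ + g ≤ x k i) (ht : 0 ≤ t) {r : κ → ℝ}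
    (hr : ∀ k, 0 ≤ r k) (hrc : ∀ k, r k * bottomWeight w x μ univ k ≤ c k) {a : Fin n → ℝ}
    (ha : ∀ i, a i < μ + g) (har : ∀ k i, 0 < w k i → x k i = μ → a i ≤ μ + r k * t) :
    a ∈ linearAdmissible w x c t := fun k => by
  rw [sum_eq_sum_bottom hw hg hgap (fun i _ => ha i)]
  calc ∑ i, (if x k i = μ then w k i else 0) * max (a i - μ) 0
      ≤ ∑ i, (if x k i = μ then w k i else 0) * (r k * t) := by
        refine sum_le_sum fun i _ => ?_
        split_ifs with hxi
        · rcases (hw k i).eq_or_lt with hzero | hpos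
          · simp [← hzero]
          · exact mul_le_mul_of_nonneg_left
              (max_le (by linarith [har k i hpos hxi]) (mul_nonneg (hr k) ht)) hpos.le
        · simp
    _ = r k * bottomWeight w x μ univ k * t := by rw [bottomWeight, ← sum_mul]; ring
    _ ≤ c k * t := mul_le_mul_of_nonneg_right (hrc k) ht

lemma bottom_mul_minval_sub_le (hw : ∀ k i, 0 ≤ w k i) (a : Fin n → ℝ) (k : κ) (i : Fin n) :
    (if x k i = μ then w k i else 0) * (minval a - μ) ≤ w k i * max (a i - x k i) 0 := by
  split_ifs with hxi
  · exact mul_le_mul_of_nonneg_left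
      ((sub_le_sub_right (minval_le a i) μ).trans (hxi ▸ le_max_left _ _)) (hw k i)
  · simpa using mul_nonneg (hw k i) (le_max_right _ _)

lemma bottomWeight_mul_le_sum (hw : ∀ k i, 0 ≤ w k i) (a : Fin n → ℝ) (k : κ) :
    bottomWeight w x μ univ k * (minval a - μ) ≤ ∑ i, w k i * max (a i - x k i) 0 := by
  rw [bottomWeight, sum_mul]
  exact sum_le_sum fun i _ => bottom_mul_minval_sub_le hw a k i

lemma mem_argminSet_of_sum_le (hw : ∀ k i, 0 ≤ w k i) {a : Fin n → ℝ} {k : κ}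
    (htight : ∑ i, w k i * max (a i - x k i) 0 ≤ bottomWeight w x μ univ k * (minval a - μ))
    {i : Fin n} (hi : 0 < w k i) (hxi : x k i = μ) : i ∈ argminSet a := by
  by_contra hmin
  refine htight.not_gt ?_
  rw [bottomWeight, sum_mul]
  refine sum_lt_sum (fun j _ => bottom_mul_minval_sub_le hw a k j) ⟨i, mem_univ i, ?_⟩
  rw [if_pos hxi, hxi]
  exact mul_lt_mul_of_pos_left ((sub_lt_sub_right (minval_lt_of_notMem_argminSet hmin) μ).trans_le
    (le_max_left _ _)) hi

lemma exists_bottom_of_bottomWeight_pos {k : κ} (hk : 0 < bottomWeight w x μ univ k) :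
    ∃ i, 0 < w k i ∧ x k i = μ := by
  obtain ⟨i, -, hi⟩ :=
    exists_lt_of_sum_lt (f := fun _ => (0 : ℝ)) (by simpa [bottomWeight] using hk)
  by_cases hxi : x k i = μ
  · exact ⟨i, by simpa [hxi] using hi, hxi⟩
  · simp [hxi] at hi

noncomputable def bindingSet (w x : κ → Fin n → ℝ) (c : κ → ℝ) (μ ε : ℝ) : Finset (Fin n) :=
  open Classical in
  univ.filter fun i => ∃ k, 0 < w k i ∧ x k i = μ ∧ ε * bottomWeight w x μ univ k = c k

variable {ε δ : ℝ}

lemma bindingSet_nonempty {k : κ} (hk : 0 < bottomWeight w x μ univ k)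
    (hkc : ε * bottomWeight w x μ univ k = c k) : (bindingSet w x c μ ε).Nonempty := by
  obtain ⟨i, hi, hxi⟩ := exists_bottom_of_bottomWeight_pos hk
  exact ⟨i, by simpa [bindingSet] using ⟨k, hi, hxi, hkc⟩⟩

lemma minval_eq_of_isMSGreatest (hw : ∀ k i, 0 ≤ w k i) (hg : 0 < g)
    (hgap : ∀ k i, 0 < w k i → x k i = μ ∨ μ + g ≤ x k i) (hε : 0 ≤ ε)
    (hεW : ∀ k, ε * bottomWeight w x μ univ k ≤ c k) {k₀ : κ}
    (hk₀ : 0 < bottomWeight w x μ univ k₀) (hk₀c : ε * bottomWeight w x μ univ k₀ = c k₀)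
    (ht : 0 ≤ t) (hεt : ε * t < g) {F : Fin n → ℝ}
    (hF : IsMSGreatest (linearAdmissible w x c t) F) : minval F = μ + ε * t := by
  obtain ⟨i₀, -⟩ := exists_bottom_of_bottomWeight_pos hk₀
  have hconst : (fun _ => μ + ε * t) ∈ linearAdmissible w x c t :=
    mem_linearAdmissible_of_le hw hg hgap ht (fun _ => hε) hεW (fun _ => by linarith)
      fun _ _ _ _ => le_rfl
  have hge := minval_le_of_msLE (hF.2 _ hconst)
  rw [minval_const i₀.pos] at hge
  have hle : bottomWeight w x μ univ k₀ * (minval F - μ) ≤ bottomWeight w x μ univ k₀ * (ε * t) :=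
    calc _ ≤ _ := bottomWeight_mul_le_sum hw F k₀
      _ ≤ c k₀ * t := hF.1 k₀
      _ = _ := by rw [← hk₀c]; ring
  linarith [le_of_mul_le_mul_left hle hk₀]

lemma argminSet_eq_bindingSet (hw : ∀ k i, 0 ≤ w k i) (hg : 0 < g)
    (hgap : ∀ k i, 0 < w k i → x k i = μ ∨ μ + g ≤ x k i) (hε : 0 ≤ ε) (hδ : 0 < δ)
    (hεW : ∀ k, ε * bottomWeight w x μ univ k ≤ c k)
    (hδW : ∀ k, ε * bottomWeight w x μ univ k ≠ c k → (ε + δ) * bottomWeight w x μ univ k ≤ c k)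
    {k₀ : κ} (hk₀ : 0 < bottomWeight w x μ univ k₀)
    (hk₀c : ε * bottomWeight w x μ univ k₀ = c k₀) (ht : 0 < t) (htg : (ε + δ) * t < g)
    {F : Fin n → ℝ} (hF : IsMSGreatest (linearAdmissible w x c t) F) :
    argminSet F = bindingSet w x c μ ε := by
  set S := bindingSet w x c μ ε
  have hεt : ε * t < g := by nlinarith
  have hmin := minval_eq_of_isMSGreatest hw hg hgap hε hεW hk₀ hk₀c ht.le hεt hF
  set a : Fin n → ℝ := fun i => if i ∈ S then μ + ε * t else μ + (ε + δ) * t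
  have haS : ∀ i ∈ S, a i = μ + ε * t := fun i hi => if_pos hi
  have haSc : ∀ i ∉ S, μ + ε * t < a i := fun i hi => by
    simp only [a, if_neg hi]
    nlinarith
  have ha_le : ∀ i, a i ≤ μ + (ε + δ) * t := fun i => by
    simp only [a]
    split_ifs <;> nlinarith
  have hmem : a ∈ linearAdmissible w x c t := by
    refine mem_linearAdmissible_of_le hw hg hgap ht.le
      (r := fun k => if ε * bottomWeight w x μ univ k = c k then ε else ε + δ)
      (fun k => by split_ifs <;> linarith) (fun k => by split_ifs with h; exacts [h.le, hδW k h])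
      (fun i => by linarith [ha_le i]) fun k i hi hxi => ?_
    split_ifs with hk
    · exact (haS i (by simpa [S, bindingSet] using ⟨k, hi, hxi, hk⟩)).le
    · exact ha_le i
  obtain ⟨hma, haa⟩ := minval_eq_and_argminSet_eq (bindingSet_nonempty hk₀ hk₀c) haS haSc
  refine (haa ▸ argminSet_subset_of_msLE (hF.2 a hmem) (hma.trans hmin.symm)).antisymm
    fun i hi => ?_
  obtain ⟨k, hik, hxi, hk⟩ : ∃ k, 0 < w k i ∧ x k i = μ ∧
      ε * bottomWeight w x μ univ k = c k := by simpa [S, bindingSet] using hi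
  refine mem_argminSet_of_sum_le hw ?_ hik hxi
  calc _ ≤ c k * t := hF.1 k
    _ = _ := by rw [hmin, ← hk]; ring

lemma single_le_bottomWeight (hw : ∀ k i, 0 ≤ w k i) {s : Finset (Fin n)} {k : κ} {i : Fin n}
    (hi : i ∈ s) (hxi : x k i = μ) : w k i ≤ bottomWeight w x μ s k := by
  simpa [bottomWeight, hxi] using single_le_sum (f := fun i => if x k i = μ then w k i else 0)
    (fun j _ => by split_ifs; exacts [hw k j, le_rfl]) hi

lemma bottomWeight_le_bottomWeight (hw : ∀ k i, 0 ≤ w k i) {s s' : Finset (Fin n)} (h : s ⊆ s')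
    (k : κ) : bottomWeight w x μ s k ≤ bottomWeight w x μ s' k :=
  sum_le_sum_of_subset_of_nonneg h fun j _ _ => by split_ifs; exacts [hw k j, le_rfl]

lemma mem_linearAdmissible_iff_restrictVec (hw : ∀ k i, 0 ≤ w k i) (hg : 0 < g)
    (hgap : ∀ k i, 0 < w k i → x k i = μ ∨ μ + g ≤ x k i) (hε : 0 ≤ ε) (ht : 0 ≤ t)
    (hεt : ε * t < g) (S : Finset (Fin n)) {a : Fin n → ℝ} (haS : ∀ i ∈ S, a i = μ + ε * t) :
    a ∈ linearAdmissible w x c t ↔ restrictVec Sᶜ a ∈ linearAdmissible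
      (fun k => restrictVec Sᶜ (w k)) (fun k => restrictVec Sᶜ (x k))
      (fun k => c k - ε * bottomWeight w x μ S k) t := by
  refine forall_congr' fun k => ?_
  have hS : ∑ i ∈ S, w k i * max (a i - x k i) 0 = bottomWeight w x μ S k * (ε * t) := by
    rw [sum_eq_sum_bottom hw hg hgap (fun i hi => by rw [haS i hi]; linarith), bottomWeight,
      sum_mul]
    refine sum_congr rfl fun i hi => ?_
    rw [haS i hi, add_sub_cancel_left, max_eq_left (mul_nonneg hε ht)]
  have hSc : ∑ j, restrictVec Sᶜ (w k) j * max (restrictVec Sᶜ a j - restrictVec Sᶜ (x k) j) 0 =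
      ∑ i ∈ Sᶜ, w k i * max (a i - x k i) 0 :=
    sum_restrictVec Sᶜ fun i => w k i * max (a i - x k i) 0
  rw [← sum_add_sum_compl S, hS, hSc]
  constructor <;> intro h <;> linarith

lemma exists_restrictVec_isMSGreatest [Fintype κ] (hw : ∀ k i, 0 ≤ w k i) (hc : ∀ k, 0 ≤ c k)
    (hn : 0 < n) {F : ℝ → Fin n → ℝ}
    (hF : ∀ᶠ t in 𝓝[>] 0, IsMSGreatest (linearAdmissible w x c t) (F t)) :
    ∃ (S : Finset (Fin n)) (μ ε : ℝ) (c' : κ → ℝ), S.Nonempty ∧ 0 ≤ ε ∧ (∀ k, 0 ≤ c' k) ∧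
      ∀ᶠ t in 𝓝[>] 0, (∀ i ∈ S, F t i = μ + ε * t) ∧
        IsMSGreatest (linearAdmissible (fun k => restrictVec Sᶜ (w k))
          (fun k => restrictVec Sᶜ (x k)) c' t) (restrictVec Sᶜ (F t)) := by
  obtain ⟨t₀, hFt₀⟩ := hF.exists
  obtain ⟨μ, g, hg, ⟨k, i, hki, hxi⟩, hgap⟩ := exists_baseLevel (exists_pos_weight hw hn hFt₀)
  obtain ⟨ε, hε, hεW, k₀, hk₀, hk₀c⟩ := exists_fillRate _ c hc
    ⟨k, hki.trans_le (single_le_bottomWeight hw (mem_univ i) hxi)⟩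
  obtain ⟨δ, hδ, hδW⟩ := exists_nextRate _ c hc hε hεW
  set S := bindingSet w x c μ ε
  have hS : S.Nonempty := bindingSet_nonempty hk₀ hk₀c
  have hsmall : ∀ᶠ t in 𝓝[>] (0 : ℝ), 0 < t ∧ (ε + δ) * t < g := by
    refine eventually_mem_nhdsWithin.and (nhdsWithin_le_nhds ?_)
    exact ((continuous_const_mul (ε + δ)).tendsto' 0 0 (mul_zero _)).eventually_lt_const hg
  refine ⟨S, μ, ε, fun k => c k - ε * bottomWeight w x μ S k, hS, hε, fun k => ?_, ?_⟩
  · nlinarith [hεW k, bottomWeight_le_bottomWeight (x := x) (μ := μ) hw (subset_univ S) k]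
  filter_upwards [hF, hsmall] with t hFt ⟨ht, htg⟩
  have hεt : ε * t < g := by nlinarith
  have hmin := minval_eq_of_isMSGreatest hw hg hgap hε hεW hk₀ hk₀c ht.le hεt hFt
  have hargmin := argminSet_eq_bindingSet hw hg hgap hε hδ hεW hδW hk₀ hk₀c ht htg hFt
  have hFS : ∀ i ∈ S, F t i = μ + ε * t := fun i hi =>
    hmin ▸ mem_argminSet_iff_eq.1 (hargmin ▸ hi)
  have hFSc : ∀ i ∉ S, μ + ε * t < F t i := fun i hi =>
    hmin ▸ minval_lt_of_notMem_argminSet (hargmin ▸ hi)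
  exact ⟨hFS, hFt.restrictVec_compl hS hFS hFSc fun a ha =>
    mem_linearAdmissible_iff_restrictVec hw hg hgap hε ht.le hεt S ha⟩

end LinearConstraints

theorem exists_monotoneOn_of_isMSGreatest {κ : Type*} [Fintype κ] {n : ℕ}
    {w x : κ → Fin n → ℝ} {c : κ → ℝ} {F : ℝ → Fin n → ℝ} (hw : ∀ k i, 0 ≤ w k i)
    (hc : ∀ k, 0 ≤ c k) (hF : ∀ᶠ t in 𝓝[>] 0, IsMSGreatest (linearAdmissible w x c t) (F t)) :
    ∃ T > 0, MonotoneOn F (Set.Ioo 0 T) := by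
  rcases Nat.eq_zero_or_pos n with rfl | hn
  · exact ⟨1, one_pos, fun _ _ _ _ _ i => i.elim0⟩
  obtain ⟨S, μ, ε, c', hS, hε, hc', hFS⟩ := exists_restrictVec_isMSGreatest hw hc hn hF
  have : Sᶜ.card < n := by simpa using (card_compl_lt_iff_nonempty S).2 hS
  obtain ⟨T₁, hT₁, hmono⟩ :=
    exists_monotoneOn_of_isMSGreatest (fun k _ => hw k _) hc' (hFS.mono fun _ h => h.2)
  obtain ⟨T₂, hT₂, hsub⟩ := mem_nhdsGT_iff_exists_Ioo_subset.1 (hFS.mono fun _ h => h.1)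
  refine ⟨min T₁ T₂, lt_min hT₁ hT₂, fun t ht t' ht' htt' i => ?_⟩
  by_cases hi : i ∈ S
  · rw [hsub ⟨ht.1, ht.2.trans_le (min_le_right _ _)⟩ i hi,
      hsub ⟨ht'.1, ht'.2.trans_le (min_le_right _ _)⟩ i hi]
    gcongr
  · simpa using hmono ⟨ht.1, ht.2.trans_le (min_le_left _ _)⟩
      ⟨ht'.1, ht'.2.trans_le (min_le_left _ _)⟩ htt'
      ((Sᶜ.orderIsoOfFin rfl).symm ⟨i, mem_compl.2 hi⟩)
termination_by n

section Application

variable {I J : ℕ} {G : Fin J → Finset (Fin I)}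

lemma IsGreatestMS.le_of_time_zero {h : Fin I → ℝ → ℝ} (hh : ∀ i y, 0 ≤ h i y) {t : ℝ}
    (ht : 0 ≤ t) {F₀ F : Fin I → ℝ} (hF₀ : IsGreatestMS I J h G 0 F₀)
    (hF : IsGreatestMS I J h G t F) :
    ∀ i, F₀ i ≤ F i := by
  have hzero : ∀ j, ∀ i ∈ G j, h i (F₀ i) = 0 := fun j =>
    (sum_eq_zero_iff_of_nonneg fun i _ => hh i _).1
      (le_antisymm (hF₀.1.2 j) (sum_nonneg fun i _ => hh i _))
  have hmem : (fun i => max (F₀ i) (F i)) ∈ admissible I J h G t := by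
    refine ⟨fun i => max_le ((hF₀.1.1 i).trans ht) (hF.1.1 i), fun j => ?_⟩
    refine le_trans (sum_le_sum fun i hi => ?_) (hF.1.2 j)
    show h i (max (F₀ i) (F i)) ≤ h i (F i)
    rcases max_choice (F₀ i) (F i) with hmax | hmax <;> rw [hmax]
    · exact (hzero j i hi).trans_le (hh i _)
  have hmax := eq_of_msLE_of_le (fun i => le_max_right _ _) (hF.2 _ hmem)
  exact fun i => (le_max_left _ _).trans_eq (congrFun hmax i)

/-- The caps `a i ≤ t` are encoded as the constraints `(a i - 0)⁺ ≤ t`, indexed by `Sum.inr`. -/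
lemma admissible_eq_linearAdmissible (ρ xs : Fin I → ℝ) {t : ℝ} (ht : 0 ≤ t) :
    admissible I J (fun i x => ρ i * max (x - xs i) 0) G t =
      linearAdmissible (Sum.elim (fun j i => if i ∈ G j then ρ i else 0) fun l => Pi.single l 1)
        (Sum.elim (fun _ => xs) fun _ => 0) (fun _ => 1) t := by
  ext a
  simp [admissible, linearAdmissible, Sum.forall, Pi.single_apply, ht, and_comm]

end Application

theorem F_locally_monotone_linear_general
    (I J : ℕ)
    (ρ xs : Fin I → ℝ)
    (hρ : ∀ i, 0 < ρ i)
    (G : Fin J → Finset (Fin I))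
    (F : ℝ → Fin I → ℝ)
    (hF : ∀ t : ℝ, 0 ≤ t →
      IsGreatestMS I J (fun i x => ρ i * max (x - xs i) 0) G t (F t)) :
    ∃ T : ℝ, 0 < T ∧
      ∀ t t' : ℝ, 0 ≤ t → t ≤ t' → t' < T → ∀ i, F t i ≤ F t' i := by
  have hw : ∀ k i, 0 ≤ Sum.elim (fun j i => if i ∈ G j then ρ i else 0)
      (fun l => Pi.single l (1 : ℝ)) k i := by
    rintro (j | l) i
    · simp only [Sum.elim_inl]; split_ifs; exacts [(hρ i).le, le_rfl]
    · simp only [Sum.elim_inr, Pi.single_apply]; split_ifs <;> norm_num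
  obtain ⟨T, hT, hmono⟩ := exists_monotoneOn_of_isMSGreatest hw (fun _ => zero_le_one)
    (F := F) (eventually_mem_nhdsWithin.mono fun t (ht : 0 < t) => by
      rw [← admissible_eq_linearAdmissible ρ xs ht.le]
      exact hF t ht.le)
  refine ⟨T, hT, fun t t' ht htt' ht'T i => ?_⟩
  rcases ht.eq_or_lt with rfl | ht
  · exact (hF 0 le_rfl).le_of_time_zero (fun i y => mul_nonneg (hρ i).le (le_max_right _ _))
      (ht.trans htt') (hF t' (ht.trans htt')) i
  · exact hmono ⟨ht, htt'.trans_lt ht'T⟩ ⟨ht.trans_le htt', ht'T⟩ htt' i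

/-- in the linear case `h_i(x) = ρ_i (x - x*_i)⁺` with `ρ_i > 0` and
`x*_i ≤ 0`, the mapping `F` is nondecreasing on some interval `[0, T)`, `T > 0`. -/
theorem F_locally_monotone_linear
    (I J : ℕ) (hI : 0 < I) (hJ : 0 < J)
    (ρ xs : Fin I → ℝ)
    (hρ : ∀ i, 0 < ρ i)
    (hxs : ∀ i, xs i ≤ 0)
    (G : Fin J → Finset (Fin I))
    (hGinj : Function.Injective G)
    (hGne : ∀ j, (G j).Nonempty)
    (hGcover : ∀ i, ∃ j, i ∈ G j)
    (F : ℝ → Fin I → ℝ)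
    (hF : ∀ t : ℝ, 0 ≤ t →
      IsGreatestMS I J (fun i x => ρ i * max (x - xs i) 0) G t (F t)) :
    ∃ T : ℝ, 0 < T ∧
      ∀ t t' : ℝ, 0 ≤ t → t ≤ t' → t' < T → ∀ i, F t i ≤ F t' i :=
  F_locally_monotone_linear_general I J ρ xs hρ G F hF
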